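/- Let Ω ⊂ ℝ² be a convex, bounded, open set with 0 ∈ Ω, let μ > 0, and let ψ be continuously differentiable on the closure of Ω with ψ(0) ≥ 0, satisfying the Neumann boundary condition: for every x ∈ ∂Ω and every outward normal vector ν at x (i.e., ν ≠ 0 with ⟨y − x, ν⟩ ≤ 0 for all y ∈ Ω), ⟨∇ψ(x), ν⟩ = 0. Define w(x) := ψ(0)·J₀(√μ·‖x‖) − ψ(x) on the closure of Ω. If √μ·‖x‖ ≤ j₁ for every x ∈ ∂Ω, then for every x ∈ ∂Ω and every outward normal vector ν at x one has ⟨∇w(x), ν⟩ ≤ 0; that is, the outward normal derivative of w is nonpositive on ∂Ω. -/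

import Mathlib

noncomputable section

lemma bessel_deriv_nonpos (J₀ : ℝ → ℝ) (hJreg : ContDiffOn ℝ 2 J₀ (Set.Ici 0))
    (hJ0 : J₀ 0 = 1)
    (hODE : ∀ x > (0 : ℝ), x * deriv (deriv J₀) x + deriv J₀ x + x * J₀ x = 0)
    (j₁ : ℝ) (hj₁ : IsLeast {x : ℝ | 0 < x ∧ deriv J₀ x = 0} j₁) :
    ∀ t : ℝ, 0 < t → t ≤ j₁ → deriv J₀ t ≤ 0 := by
  set g := derivWithin J₀ (Set.Ici 0) with hg
  have hgc : ContinuousOn g (Set.Ici 0) :=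
    hJreg.continuousOn_derivWithin (uniqueDiffOn_Ici 0) (by norm_num)
  have hgeq : ∀ x : ℝ, 0 < x → g x = deriv J₀ x := fun x hx =>
    derivWithin_of_mem_nhds (Ici_mem_nhds hx)
  have hJ' : ContDiffOn ℝ 1 (deriv J₀) (Set.Ioi 0) :=
    (hJreg.mono Set.Ioi_subset_Ici_self).deriv_of_isOpen isOpen_Ioi (by norm_num)
  have hd2 : ∀ x : ℝ, 0 < x → HasDerivAt (deriv J₀) (deriv (deriv J₀) x) x := fun x hx =>
    (((hJ'.differentiableOn (by norm_num)) x hx).differentiableAt (Ioi_mem_nhds hx)).hasDerivAt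
  set F := fun r : ℝ => r * g r with hF
  have hFc : ContinuousOn F (Set.Ici 0) := continuous_id.continuousOn.mul hgc
  have hF0 : F 0 = 0 := by simp [hF]
  have hFderiv : ∀ x : ℝ, 0 < x → HasDerivAt F (-(x * J₀ x)) x := by
    intro x hx
    have h1 : HasDerivAt (fun r : ℝ => r * deriv J₀ r)
        (1 * deriv J₀ x + x * deriv (deriv J₀) x) x := (hasDerivAt_id x).mul (hd2 x hx)
    have h2 : F =ᶠ[nhds x] fun r : ℝ => r * deriv J₀ r := by
      filter_upwards [Ioi_mem_nhds hx] with r hr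
      simp [hF, hgeq r hr]
    have h3 := h1.congr_of_eventuallyEq h2
    have e : 1 * deriv J₀ x + x * deriv (deriv J₀) x = -(x * J₀ x) := by
      have := hODE x hx; linarith
    exact e ▸ h3
  -- positivity of J₀ near 0
  have hcont : ContinuousWithinAt J₀ (Set.Ici 0) 0 := hJreg.continuousOn 0 Set.self_mem_Ici
  have hev : ∀ᶠ r in nhdsWithin 0 (Set.Ici 0), 0 < J₀ r := by
    have h1 : ∀ᶠ y in nhds (J₀ 0), 0 < y := by
      rw [hJ0]; exact eventually_gt_nhds one_pos
    exact hcont h1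
  rw [eventually_nhdsWithin_iff, Metric.eventually_nhds_iff] at hev
  obtain ⟨δ, hδpos, hδ⟩ := hev
  have hj₁pos : 0 < j₁ := hj₁.1.1
  set x₀ := min δ j₁ / 2 with hx₀
  have hx₀pos : 0 < x₀ := by
    have := lt_min hδpos hj₁pos; positivity
  have hx₀δ : x₀ < δ := by
    have : min δ j₁ ≤ δ := min_le_left _ _
    linarith
  have hx₀j : x₀ < j₁ := by
    have : min δ j₁ ≤ j₁ := min_le_right _ _
    linarith
  have hanti : StrictAntiOn F (Set.Icc 0 x₀) := by
    apply strictAntiOn_of_deriv_neg (convex_Icc 0 x₀)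
      (hFc.mono (Set.Icc_subset_Ici_self))
    intro r hr
    rw [interior_Icc] at hr
    obtain ⟨hr1, hr2⟩ := hr
    rw [(hFderiv r hr1).deriv]
    have hJpos : 0 < J₀ r := by
      apply hδ (show dist r 0 < δ by rw [Real.dist_eq, sub_zero, abs_of_pos hr1]; linarith)
      exact le_of_lt hr1
    nlinarith [mul_pos hr1 hJpos]
  have hFx₀ : F x₀ < 0 := by
    have := hanti ⟨le_rfl, hx₀pos.le⟩ ⟨hx₀pos.le, le_rfl⟩ hx₀pos
    rwa [hF0] at this
  have hgx₀ : g x₀ < 0 := by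
    have h' : x₀ * g x₀ < 0 := hFx₀
    nlinarith [h']
  intro t ht htj
  rcases eq_or_lt_of_le htj with heq | hlt
  · rw [heq]; exact le_of_eq hj₁.1.2
  by_contra hpos
  push_neg at hpos
  have hgt : 0 < g t := by rw [hgeq t ht]; exact hpos
  have hsub : Set.uIcc x₀ t ⊆ Set.Ici 0 := by
    intro z hz
    rw [Set.mem_uIcc] at hz
    rcases hz with ⟨h1, _⟩ | ⟨h1, _⟩ <;> simp only [Set.mem_Ici] <;> linarith
  have h0mem : (0:ℝ) ∈ Set.uIcc (g x₀) (g t) := by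
    rw [Set.mem_uIcc]; left; exact ⟨hgx₀.le, hgt.le⟩
  obtain ⟨z, hz, hz0⟩ := intermediate_value_uIcc (hgc.mono hsub) h0mem
  rw [Set.mem_uIcc] at hz
  have hzpos : 0 < z := by rcases hz with ⟨h1, _⟩ | ⟨h1, _⟩ <;> linarith
  have hzlt : z < j₁ := by rcases hz with ⟨_, h2⟩ | ⟨_, h2⟩ <;> linarith
  have hzero : deriv J₀ z = 0 := by rw [← hgeq z hzpos]; exact hz0
  exact absurd (hj₁.2 ⟨hzpos, hzero⟩) (not_le.mpr hzlt)


/-- The Euclidean plane. -/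
abbrev E2 := EuclideanSpace ℝ (Fin 2)

/-- Let `Ω ⊂ ℝ²` be a convex, bounded, open set with `0 ∈ Ω`, `μ > 0`, and let `ψ` be `C¹` on
the closure of `Ω` with `ψ(0) ≥ 0`, satisfying the Neumann boundary condition
`⟨∇ψ(x), ν⟩ = 0` for every boundary point `x` and outward normal `ν` at `x`. If
`√μ ‖x‖ ≤ j₁` for all `x ∈ ∂Ω`, then the comparison function
`w(x) := ψ(0) J₀(√μ ‖x‖) − ψ(x)` has nonpositive outward normal derivative on `∂Ω`:
`⟨∇w(x), ν⟩ ≤ 0` for every `x ∈ ∂Ω` and every outward normal `ν` at `x`. Here `J₀` is the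
Bessel function of order zero (solution on `[0, ∞)` of `x u'' + u' + x u = 0`, `u(0) = 1`,
`u'(0) = 0`) and `j₁` is the smallest positive zero of `J₀'`. -/
theorem comparison_function_normal_derivative_nonpos
    (J₀ : ℝ → ℝ) (hJreg : ContDiffOn ℝ 2 J₀ (Set.Ici 0))
    (hJ0 : J₀ 0 = 1) (hJ0' : derivWithin J₀ (Set.Ici 0) 0 = 0)
    (hODE : ∀ x > (0 : ℝ), x * deriv (deriv J₀) x + deriv J₀ x + x * J₀ x = 0)
    (j₁ : ℝ) (hj₁ : IsLeast {x : ℝ | 0 < x ∧ deriv J₀ x = 0} j₁)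
    (Ω : Set E2) (hΩconv : Convex ℝ Ω) (hΩbd : Bornology.IsBounded Ω) (hΩopen : IsOpen Ω)
    (h0 : (0 : E2) ∈ Ω)
    (μ : ℝ) (hμ : 0 < μ)
    (ψ : E2 → ℝ) (hψreg : ContDiffOn ℝ 1 ψ (closure Ω)) (hψ0 : ψ 0 ≥ 0)
    (hNeumann : ∀ x ∈ frontier Ω, ∀ ν : E2, ν ≠ 0 →
      (∀ y ∈ Ω, (inner ℝ (y - x) ν : ℝ) ≤ 0) → (inner ℝ (gradient ψ x) ν : ℝ) = 0)
    (w : E2 → ℝ) (hw : ∀ x : E2, w x = ψ 0 * J₀ (Real.sqrt μ * ‖x‖) - ψ x)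
    (hsmall : ∀ x ∈ frontier Ω, Real.sqrt μ * ‖x‖ ≤ j₁) :
    ∀ x ∈ frontier Ω, ∀ ν : E2, ν ≠ 0 →
      (∀ y ∈ Ω, (inner ℝ (y - x) ν : ℝ) ≤ 0) → (inner ℝ (gradient w x) ν : ℝ) ≤ 0 := by
  intro x hx ν hν hnormal
  by_cases hdw : DifferentiableAt ℝ w x
  swap
  · rw [gradient_eq_zero_of_not_differentiableAt hdw, inner_zero_left]
  have hxne : x ≠ 0 := by
    rintro rfl
    rw [hΩopen.frontier_eq] at hx
    exact hx.2 h0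
  have hxnorm : 0 < ‖x‖ := norm_pos_iff.mpr hxne
  set s := Real.sqrt μ with hsdef
  have hs : 0 < s := Real.sqrt_pos.mpr hμ
  set t := s * ‖x‖ with htdef
  have htpos : 0 < t := mul_pos hs hxnorm
  -- derivative of the norm
  have hnsq : HasFDerivAt (fun y : EuclideanSpace ℝ (Fin 2) => ‖y‖ ^ 2)
      (2 • (innerSL ℝ x)) x := (hasStrictFDerivAt_norm_sq x).hasFDerivAt
  have hsqne : ‖x‖ ^ 2 ≠ 0 := pow_ne_zero 2 (ne_of_gt hxnorm)
  have hsqrt : HasDerivAt Real.sqrt (1 / (2 * Real.sqrt (‖x‖ ^ 2))) (‖x‖ ^ 2) :=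
    Real.hasDerivAt_sqrt hsqne
  have hcomp := hsqrt.comp_hasFDerivAt x hnsq
  have hfun : (Real.sqrt ∘ fun y : EuclideanSpace ℝ (Fin 2) => ‖y‖ ^ 2)
      = fun y : EuclideanSpace ℝ (Fin 2) => ‖y‖ :=
    funext fun y => Real.sqrt_sq (norm_nonneg y)
  rw [hfun] at hcomp
  have hnormderiv : HasFDerivAt (fun y : EuclideanSpace ℝ (Fin 2) => ‖y‖)
      ((‖x‖)⁻¹ • innerSL ℝ x) x := by
    refine hcomp.congr_fderiv ?_
    symm
    ext y
    rw [Real.sqrt_sq (norm_nonneg x)]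
    simp only [ContinuousLinearMap.coe_smul', Pi.smul_apply, ContinuousLinearMap.smul_apply]
    rw [smul_comm]
    simp [smul_smul]
    ring
  -- derivative of J₀ at t
  have hJt : HasDerivAt J₀ (deriv J₀ t) t := by
    have hct : ContDiffAt ℝ 2 J₀ t := hJreg.contDiffAt (Ici_mem_nhds htpos)
    exact (hct.differentiableAt (by norm_num)).hasDerivAt
  have hlin : HasDerivAt (fun r : ℝ => s * r) s ‖x‖ := by
    simpa using (hasDerivAt_id (‖x‖)).const_mul s
  have hφ : HasDerivAt (fun r : ℝ => ψ 0 * J₀ (s * r)) (ψ 0 * (deriv J₀ t * s)) ‖x‖ := by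
    have := (hJt.comp (‖x‖) hlin).const_mul (ψ 0)
    exact this
  have hgfd : HasFDerivAt (fun y : EuclideanSpace ℝ (Fin 2) => ψ 0 * J₀ (s * ‖y‖))
      ((ψ 0 * (deriv J₀ t * s)) • ((‖x‖)⁻¹ • innerSL ℝ x)) x := by
    have := hφ.comp_hasFDerivAt x hnormderiv
    exact this
  -- differentiability of ψ at x
  have hψeq : ψ = fun y => ψ 0 * J₀ (s * ‖y‖) - w y := funext fun y => by rw [hw y]; ring
  have hψd : DifferentiableAt ℝ ψ x := by
    rw [hψeq]; exact hgfd.differentiableAt.sub hdw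
  have hweq : w = fun y => ψ 0 * J₀ (s * ‖y‖) - ψ y := funext hw
  have hwfd : HasFDerivAt w
      ((ψ 0 * (deriv J₀ t * s)) • ((‖x‖)⁻¹ • innerSL ℝ x) - fderiv ℝ ψ x) x := by
    rw [hweq]; exact hgfd.sub hψd.hasFDerivAt
  -- relate gradient and fderiv
  have hkey : ∀ (f : EuclideanSpace ℝ (Fin 2) → ℝ),
      (inner ℝ (gradient f x) ν : ℝ) = fderiv ℝ f x ν := fun f =>
    InnerProductSpace.toDual_symm_apply
  rw [hkey w, hwfd.fderiv]
  have hψν : fderiv ℝ ψ x ν = 0 := by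
    rw [← hkey ψ]; exact hNeumann x hx ν hν hnormal
  have hxν : (0:ℝ) ≤ inner ℝ x ν := by
    have := hnormal 0 h0
    rw [zero_sub, inner_neg_left] at this
    linarith
  have hJ't : deriv J₀ t ≤ 0 := (bessel_deriv_nonpos J₀ hJreg hJ0 hODE j₁ hj₁) t htpos (hsmall x hx)
  simp only [ContinuousLinearMap.sub_apply, ContinuousLinearMap.smul_apply, hψν,
    innerSL_apply_apply, smul_eq_mul, sub_zero]
  have h1 : ψ 0 * (deriv J₀ t * s) ≤ 0 :=
    mul_nonpos_of_nonneg_of_nonpos hψ0 (mul_nonpos_of_nonpos_of_nonneg hJ't hs.le)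
  have h2 : (0:ℝ) ≤ (‖x‖)⁻¹ * inner ℝ x ν := mul_nonneg (inv_nonneg.mpr (norm_nonneg x)) hxν
  calc ψ 0 * (deriv J₀ t * s) * ((‖x‖)⁻¹ * inner ℝ x ν) ≤ 0 :=
    mul_nonpos_of_nonpos_of_nonneg h1 h2


end
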